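/- arXiv:2604.00384 — 2 statements merged into one kernel-verified Lean document; each statement's English description precedes it below -/
import Mathlib

section
/- For every real number u with u⁴ < 1/2, one has β(u) > 0, where β(u) := (6 / (δ(u)² · (1 − u⁴)^{13/4})) · (−u + (1 − u⁴)^{1/4}) · (−1 + u⁴ + u·(1 − u⁴)^{3/4}) · (−1 + u³·(1 − u⁴)^{1/4} + u·(1 − u⁴)^{3/4}), and δ(u)² := (1 + u³·(1 − u⁴)^{−3/4})² + (1 − u³·(1 − u⁴)^{−3/4})². All fractional powers are real powers of the positive number 1 − u⁴. -/
noncomputable def deltaSq (u : ℝ) : ℝ :=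
  (1 + u ^ 3 * (1 - u ^ 4) ^ (-(3 : ℝ) / 4)) ^ 2 +
    (1 - u ^ 3 * (1 - u ^ 4) ^ (-(3 : ℝ) / 4)) ^ 2

noncomputable def beta (u : ℝ) : ℝ :=
  (6 / (deltaSq u * (1 - u ^ 4) ^ ((13 : ℝ) / 4))) *
    (-u + (1 - u ^ 4) ^ ((1 : ℝ) / 4)) *
    (-1 + u ^ 4 + u * (1 - u ^ 4) ^ ((3 : ℝ) / 4)) *
    (-1 + u ^ 3 * (1 - u ^ 4) ^ ((1 : ℝ) / 4) + u * (1 - u ^ 4) ^ ((3 : ℝ) / 4))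

/-- Positivity of `β` on the parameter domain `u⁴ < 1/2`. -/
theorem stmt10 (u : ℝ) (hu : u ^ 4 < 1 / 2) : 0 < beta u := by
  have h1 : (0 : ℝ) < 1 - u ^ 4 := by nlinarith [pow_two_nonneg (u ^ 2)]
  set t : ℝ := (1 - u ^ 4) ^ ((1 : ℝ) / 4) with htdef
  have ht : 0 < t := Real.rpow_pos_of_pos h1 _
  have ht4 : t ^ 4 = 1 - u ^ 4 := by
    rw [htdef, ← Real.rpow_natCast ((1 - u ^ 4) ^ ((1 : ℝ) / 4)) 4,
      ← Real.rpow_mul h1.le]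
    norm_num
  have h3 : (1 - u ^ 4) ^ ((3 : ℝ) / 4) = t ^ 3 := by
    rw [show ((3 : ℝ) / 4) = (1 / 4) * (3 : ℕ) by norm_num,
      Real.rpow_mul h1.le, Real.rpow_natCast]
  have h13 : (1 - u ^ 4) ^ ((13 : ℝ) / 4) = t ^ 13 := by
    rw [show ((13 : ℝ) / 4) = (1 / 4) * (13 : ℕ) by norm_num,
      Real.rpow_mul h1.le, Real.rpow_natCast]
  have hneg3 : (1 - u ^ 4) ^ (-(3 : ℝ) / 4) = (t ^ 3)⁻¹ := by
    rw [show (-(3 : ℝ) / 4) = -((3 : ℝ) / 4) by ring, Real.rpow_neg h1.le, h3]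
  have habs : |u| < t := by
    refine lt_of_pow_lt_pow_left₀ 4 ht.le ?_
    have : |u| ^ 4 = u ^ 4 := by
      rw [← abs_pow]; exact abs_of_nonneg (by positivity)
    rw [this, ht4]; linarith
  have htu : u < t := (abs_lt.mp habs).2
  have htu' : -t < u := (abs_lt.mp habs).1
  have ht3 : u ^ 3 < t ^ 3 := by
    have h1' : |u| ^ 3 < t ^ 3 := by
      exact pow_lt_pow_left₀ habs (abs_nonneg u) (by norm_num)
    have h2' : u ^ 3 ≤ |u| ^ 3 := by
      rw [← abs_pow]; exact le_abs_self _
    linarith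
  have hD : 0 < deltaSq u := by
    rw [deltaSq, hneg3]
    nlinarith [sq_nonneg (u ^ 3 * (t ^ 3)⁻¹)]
  have hc : 0 < 6 / (deltaSq u * (1 - u ^ 4) ^ ((13 : ℝ) / 4)) := by
    rw [h13]; positivity
  have hP1 : (0 : ℝ) < -u + t := by linarith
  have hP2 : -1 + u ^ 4 + u * t ^ 3 < 0 := by
    nlinarith [pow_pos ht 3, mul_pos (pow_pos ht 3) hP1]
  have hP3 : -1 + u ^ 3 * t + u * t ^ 3 < 0 := by
    nlinarith [mul_pos hP1 (sub_pos.2 ht3)]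
  rw [beta, h3]
  have hfirst : 0 < 6 / (deltaSq u * (1 - u ^ 4) ^ ((13 : ℝ) / 4)) * (-u + t) :=
    mul_pos hc hP1
  have hsecond := mul_neg_of_pos_of_neg hfirst hP2
  exact mul_pos_of_neg_of_neg hsecond hP3
end

section
/- Let β be defined for u⁴ < 1/2 by β(u) := (6 / (δ(u)² · (1 − u⁴)^{13/4})) · (−u + (1 − u⁴)^{1/4}) · (−1 + u⁴ + u·(1 − u⁴)^{3/4}) · (−1 + u³·(1 − u⁴)^{1/4} + u·(1 − u⁴)^{3/4}), where δ(u)² := (1 + u³·(1 − u⁴)^{−3/4})² + (1 − u³·(1 − u⁴)^{−3/4})², and set λ(u) := u · √(β(u)). Then: (i) for every u with u⁴ < 1/2, λ(u) = 0 if and only if u = 0; and (ii) λ is differentiable at 0 with λ′(0) = √3; in particular λ′(0) ≠ 0. -/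
noncomputable def lam (u : ℝ) : ℝ := u * Real.sqrt (beta u)

lemma deltaSq_pos (u : ℝ) : 0 < deltaSq u := by
  unfold deltaSq
  nlinarith [sq_nonneg (u ^ 3 * (1 - u ^ 4) ^ (-(3 : ℝ) / 4))]

lemma deltaSq_continuousAt {u : ℝ} (hu : u ^ 4 < 1) : ContinuousAt deltaSq u := by
  have h : 1 - u ^ 4 ≠ 0 := by linarith
  unfold deltaSq
  fun_prop (disch := exact Or.inl h)

lemma beta_continuousAt {u : ℝ} (hu : u ^ 4 < 1) : ContinuousAt beta u := by
  have h : 0 < 1 - u ^ 4 := by linarith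
  have hden : deltaSq u * (1 - u ^ 4) ^ ((13 : ℝ) / 4) ≠ 0 :=
    (mul_pos (deltaSq_pos u) (Real.rpow_pos_of_pos h _)).ne'
  have := deltaSq_continuousAt hu
  unfold beta
  fun_prop (disch := first | exact Or.inl h.ne' | exact hden)

lemma beta_zero : beta 0 = 3 := by
  norm_num [beta, deltaSq]

lemma rpow_quarter_pow {x : ℝ} (hx : 0 ≤ x) (n : ℕ) :
    (x ^ (1 / 4 : ℝ)) ^ n = x ^ ((n : ℝ) / 4) := by
  rw [← Real.rpow_natCast, ← Real.rpow_mul hx]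
  ring_nf

lemma cube_mul_add_mul_cube_lt_one {u a : ℝ} (h : u ^ 4 + a ^ 4 = 1) (hne : u ^ 2 ≠ a ^ 2) :
    u ^ 3 * a + u * a ^ 3 < 1 := by
  have hsq : (u * a) ^ 2 < 1 / 2 := by
    have := sq_pos_of_ne_zero (sub_ne_zero.mpr hne)
    nlinarith
  nlinarith [sq_nonneg (u ^ 2 + a ^ 2 - u * a), sq_nonneg (u * a), sq_nonneg (u ^ 2 + a ^ 2)]

lemma beta_pos {u : ℝ} (hu : u ^ 4 < 1 / 2) : 0 < beta u := by
  have hx : 0 ≤ 1 - u ^ 4 := by linarith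
  set A := (1 - u ^ 4) ^ (1 / 4 : ℝ) with hA_def
  have hA : 0 < A := Real.rpow_pos_of_pos (by linarith) _
  have hA4 : u ^ 4 + A ^ 4 = 1 := by
    rw [rpow_quarter_pow hx]; norm_num
  have hbeta : beta u =
      6 / (deltaSq u * A ^ 13) * ((A - u) ^ 2 * A ^ 3 * (1 - (u ^ 3 * A + u * A ^ 3))) := by
    have h3 := rpow_quarter_pow hx 3
    have h13 := rpow_quarter_pow hx 13
    push_cast at h3 h13
    rw [beta, ← h3, ← h13, ← hA_def]
    linear_combination
      (6 / (deltaSq u * A ^ 13)) * (A - u) * (u ^ 3 * A + u * A ^ 3 - 1) * hA4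
  have hlt : |u| < A := by
    rw [← pow_lt_pow_iff_left₀ (abs_nonneg u) hA.le (by norm_num : 4 ≠ 0), pow_abs,
      abs_of_nonneg (by positivity)]
    linarith
  have hsq : u ^ 2 ≠ A ^ 2 := (sq_lt_sq.mpr (by rwa [abs_of_pos hA])).ne
  have hF := cube_mul_add_mul_cube_lt_one hA4 hsq
  have hAu : 0 < A - u := sub_pos.mpr (lt_of_abs_lt hlt)
  rw [hbeta]
  have := deltaSq_pos u
  have : 0 < 1 - (u ^ 3 * A + u * A ^ 3) := by linarith
  positivity

theorem ContinuousAt.hasDerivAt_id_mul {𝕜 : Type*} [NontriviallyNormedField 𝕜] {g : 𝕜 → 𝕜}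
    (hg : ContinuousAt g 0) : HasDerivAt (fun x => x * g x) (g 0) 0 := by
  rw [hasDerivAt_iff_tendsto_slope]
  refine (hg.tendsto.mono_left nhdsWithin_le_nhds).congr' ?_
  filter_upwards [self_mem_nhdsWithin] with x (hx : x ≠ 0)
  rw [slope_def_field]
  field_simp
  simp

lemma lam_eq_zero_iff {u : ℝ} (hu : u ^ 4 < 1 / 2) : lam u = 0 ↔ u = 0 := by
  rw [lam, mul_eq_zero, Real.sqrt_eq_zero', or_iff_left (beta_pos hu).not_ge]

lemma hasDerivAt_lam : HasDerivAt lam (Real.sqrt 3) 0 := by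
  have hcont : ContinuousAt (fun u => Real.sqrt (beta u)) 0 :=
    Real.continuous_sqrt.continuousAt.comp (beta_continuousAt (by norm_num))
  rw [← beta_zero]
  exact hcont.hasDerivAt_id_mul

/-- `λ(u) = u √(β(u))` vanishes exactly at `u = 0` on the domain `u⁴ < 1/2`,
and `λ` is differentiable at `0` with `λ'(0) = √3 ≠ 0`. -/
theorem stmt11 :
    (∀ u : ℝ, u ^ 4 < 1 / 2 → (lam u = 0 ↔ u = 0)) ∧
      HasDerivAt lam (Real.sqrt 3) 0 ∧ deriv lam 0 ≠ 0 := by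
  refine ⟨fun u hu => lam_eq_zero_iff hu, hasDerivAt_lam, ?_⟩
  rw [hasDerivAt_lam.deriv]
  positivity
end
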